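/- For every a > 1, every b ≥ 0, and every x ∈ ℝ, 1 − Φ(a·x + b) < min{2, a} · (1 − Φ(x)). -/

import Mathlib

/-!
For `x ≥ 0` the claim is monotonicity of `Φ`, as `a x + b ≥ x`. For `x < 0` put `y = -x > 0`,
so that `1 - Φ x = Φ y > 1/2` and the bound `2` is immediate. After dropping `b`, the bound `a`
becomes `Φ (a y) < a Φ y`: the density is at most `φ y` on `[y, a y]`, so
`Φ (a y) - Φ y ≤ (a - 1) y φ y`, and `y φ y < 1/2 < Φ y`.
-/

open MeasureTheory

/-- The standard normal cumulative distribution function. -/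
noncomputable def Phi (x : ℝ) : ℝ :=
  (ProbabilityTheory.gaussianReal 0 1 (Set.Iic x)).toReal

open ProbabilityTheory Set

local notation "φ" => gaussianPDFReal 0 1

theorem Phi_eq_cdf : Phi = cdf (gaussianReal 0 1) :=
  funext fun x => (cdf_eq_real _ x).symm

theorem Phi_monotone : Monotone Phi := Phi_eq_cdf ▸ (cdf _).mono

theorem Phi_sub_Phi_eq_integral {x y : ℝ} (hxy : x ≤ y) :
    Phi y - Phi x = ∫ t in x..y, φ t := by
  have h := (cdf (gaussianReal 0 1)).measure_Ioc x y
  rw [measure_cdf, gaussianReal_apply_eq_integral 0 one_ne_zero, ← Phi_eq_cdf,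
    ENNReal.ofReal_eq_ofReal_iff (setIntegral_nonneg measurableSet_Ioc
      fun t _ => gaussianPDFReal_nonneg 0 1 t) (sub_nonneg.2 (Phi_monotone hxy))] at h
  rw [← h, intervalIntegral.integral_of_le hxy]

theorem Phi_strictMono : StrictMono Phi := fun x y hxy => by
  have hpos : 0 < ∫ t in x..y, φ t :=
    intervalIntegral.intervalIntegral_pos_of_pos
      (integrable_gaussianPDFReal 0 1).intervalIntegrable
      (fun t => gaussianPDFReal_pos 0 1 t one_ne_zero) hxy
  linarith [Phi_sub_Phi_eq_integral hxy.le]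

theorem Phi_pos (x : ℝ) : 0 < Phi x :=
  ENNReal.toReal_nonneg.trans_lt (Phi_strictMono (sub_one_lt x))

theorem Phi_lt_one (x : ℝ) : Phi x < 1 :=
  (Phi_strictMono (lt_add_one x)).trans_le (by simpa [Phi_eq_cdf] using cdf_le_one _ (x + 1))

theorem one_sub_Phi (x : ℝ) : 1 - Phi x = Phi (-x) := by
  have hsymm : gaussianReal 0 1 (Iic (-x)) = gaussianReal 0 1 (Ioi x) := by
    conv_lhs => rw [← neg_zero, ← gaussianReal_map_neg]
    rw [Measure.map_apply measurable_neg measurableSet_Iic, neg_preimage, neg_Iic, neg_neg,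
      measure_congr (Ioi_ae_eq_Ici' (gaussianReal_absolutelyContinuous 0 one_ne_zero
        (measure_singleton x)))]
  rw [Phi, Phi, hsymm, ← compl_Iic, prob_compl_eq_one_sub measurableSet_Iic,
    ENNReal.toReal_sub_of_le prob_le_one ENNReal.one_ne_top, ENNReal.toReal_one]

theorem half_lt_Phi {y : ℝ} (hy : 0 < y) : 1 / 2 < Phi y := by
  have h0 : 1 - Phi 0 = Phi 0 := by rw [one_sub_Phi, neg_zero]
  linarith [Phi_strictMono hy]

theorem gaussianPDFReal_zero_one (x : ℝ) :
    φ x = (√(2 * Real.pi))⁻¹ * Real.exp (-x ^ 2 / 2) := by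
  simp [gaussianPDFReal]

theorem gaussianPDFReal_antitoneOn : AntitoneOn φ (Ici 0) := fun y hy z _ hyz => by
  simp only [gaussianPDFReal_zero_one]
  gcongr

-- `y < 1 + y ^ 2 / 2 ≤ exp (y ^ 2 / 2)` and `√(2π) > 2`.
theorem mul_gaussianPDFReal_lt_half (y : ℝ) : y * φ y < 1 / 2 := by
  have hexp : y * Real.exp (-y ^ 2 / 2) < 1 := by
    have h := Real.add_one_le_exp (y ^ 2 / 2)
    rw [neg_div, Real.exp_neg, ← div_eq_mul_inv, div_lt_one (Real.exp_pos _)]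
    nlinarith [sq_nonneg (y - 1)]
  have hsqrt : 2 < √(2 * Real.pi) := by
    rw [Real.lt_sqrt zero_le_two]
    nlinarith [Real.pi_gt_three]
  have hc : (√(2 * Real.pi))⁻¹ < 1 / 2 := by
    rw [one_div]; exact inv_strictAnti₀ two_pos hsqrt
  rw [gaussianPDFReal_zero_one, mul_left_comm]
  calc (√(2 * Real.pi))⁻¹ * (y * Real.exp (-y ^ 2 / 2)) < (√(2 * Real.pi))⁻¹ * 1 := by
        gcongr
    _ < 1 / 2 := by rwa [mul_one]

theorem Phi_sub_Phi_le {y z : ℝ} (hy : 0 ≤ y) (hyz : y ≤ z) :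
    Phi z - Phi y ≤ (z - y) * φ y := by
  rw [Phi_sub_Phi_eq_integral hyz, ← smul_eq_mul, ← intervalIntegral.integral_const]
  refine intervalIntegral.integral_mono_on hyz
    (integrable_gaussianPDFReal 0 1).intervalIntegrable intervalIntegrable_const
    fun t ht => gaussianPDFReal_antitoneOn (mem_Ici.2 hy) (mem_Ici.2 (hy.trans ht.1)) ht.1

theorem Phi_mul_lt_mul_Phi {a y : ℝ} (ha : 1 < a) (hy : 0 < y) : Phi (a * y) < a * Phi y := by
  have hincr := Phi_sub_Phi_le hy.le (le_mul_of_one_le_left hy.le ha.le)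
  have hslope : (a * y - y) * φ y < (a - 1) * Phi y := by
    rw [← sub_one_mul, mul_assoc]
    exact mul_lt_mul_of_pos_left ((mul_gaussianPDFReal_lt_half y).trans (half_lt_Phi hy))
      (sub_pos.2 ha)
  linarith

/-- Case (1) of the paper's Lemma on the tail ratio: for `a > 1`, `b ≥ 0` and all `x`,
`1 − Φ(a·x + b) < min{2, a}·(1 − Φ(x))`. -/
theorem tail_ratio_bound_b_nonneg (a b x : ℝ) (ha : 1 < a) (hb : 0 ≤ b) :
    1 - Phi (a * x + b) < min 2 a * (1 - Phi x) := by
  rcases le_or_gt 0 x with hx | hx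
  · have htail_pos : 0 < 1 - Phi x := sub_pos.2 (Phi_lt_one x)
    have hmono : Phi x ≤ Phi (a * x + b) :=
      Phi_monotone (le_add_of_le_of_nonneg (le_mul_of_one_le_left hx ha.le) hb)
    calc 1 - Phi (a * x + b) ≤ 1 - Phi x := by linarith
      _ < min 2 a * (1 - Phi x) := lt_mul_of_one_lt_left htail_pos (lt_min one_lt_two ha)
  · rw [one_sub_Phi x, min_mul_of_nonneg _ _ (Phi_pos _).le]
    refine lt_min ?_ ?_
    · linarith [Phi_pos (a * x + b), half_lt_Phi (neg_pos.2 hx)]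
    · have hshift : Phi (a * x) ≤ Phi (a * x + b) := Phi_monotone (le_add_of_nonneg_right hb)
      have hscale := Phi_mul_lt_mul_Phi ha (neg_pos.2 hx)
      rw [mul_neg, ← one_sub_Phi] at hscale
      linarith
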